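/- If a graph G has an induced cycle of length at least k and of the same parity as k (for k ≥ 3), then G has a pivot-minor isomorphic to C_k. -/

import Mathlib

open SimpleGraph

/-- The pivot toggle: pairs of vertices lying in different classes among
`N(u)∩N(v)`, `N(u)\N(v)\{v}`, `N(v)\N(u)\{u}`. -/
def pivotToggle {V : Type*} (G : SimpleGraph V) (u v a b : V) : Prop :=
  ((G.Adj u a ∧ G.Adj v a) ∧ (G.Adj u b ∧ ¬ G.Adj v b ∧ b ≠ v)) ∨
  ((G.Adj u a ∧ G.Adj v a) ∧ (G.Adj v b ∧ ¬ G.Adj u b ∧ b ≠ u)) ∨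
  ((G.Adj u a ∧ ¬ G.Adj v a ∧ a ≠ v) ∧ (G.Adj v b ∧ ¬ G.Adj u b ∧ b ≠ u)) ∨
  ((G.Adj u b ∧ G.Adj v b) ∧ (G.Adj u a ∧ ¬ G.Adj v a ∧ a ≠ v)) ∨
  ((G.Adj u b ∧ G.Adj v b) ∧ (G.Adj v a ∧ ¬ G.Adj u a ∧ a ≠ u)) ∨
  ((G.Adj u b ∧ ¬ G.Adj v b ∧ b ≠ v) ∧ (G.Adj v a ∧ ¬ G.Adj u a ∧ a ≠ u))

/-- The graph `G ∧ uv` obtained from `G` by pivoting the edge `uv`: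
complement the adjacency between the three classes pairwise and swap `u` and `v`. -/
def pivot {V : Type*} (G : SimpleGraph V) (u v : V) : SimpleGraph V :=
  letI := Classical.decEq V
  SimpleGraph.fromRel (fun x y =>
    (pivotToggle G u v (Equiv.swap u v x) (Equiv.swap u v y) ∧
      ¬ G.Adj (Equiv.swap u v x) (Equiv.swap u v y)) ∨
    (¬ pivotToggle G u v (Equiv.swap u v x) (Equiv.swap u v y) ∧
      G.Adj (Equiv.swap u v x) (Equiv.swap u v y)))

/-- One pivot step: `H` is obtained from `G` by pivoting an edge. -/
def PivotStep {V : Type*} (G H : SimpleGraph V) : Prop :=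
  ∃ u v, G.Adj u v ∧ H = pivot G u v

/-- `H` is (isomorphic to) a pivot-minor of `G`: `H` can be obtained from `G` by a
sequence of pivots and vertex deletions. -/
def IsPivotMinor {W V : Type*} (H : SimpleGraph W) (G : SimpleGraph V) : Prop :=
  ∃ G' : SimpleGraph V, Relation.ReflTransGen PivotStep G G' ∧
    ∃ S : Set V, Nonempty (H ≃g G'.induce S)

/-!
Pivoting is compatible with induced embeddings: if `K` is an induced subgraph of `G` via `f`,
then pivoting `K` on `uv` and `G` on `f u f v` keeps `f` an induced embedding. Hence pivot-minors
of pivot-minors are pivot-minors. In `C_{n+2}` the edge `01` has `N(0) \ N(1) = {n+1}`,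
`N(1) \ N(0) = {2}` and no common neighbour, so the pivot on it toggles only the pair `{2, n+1}`;
deleting `0` and `1` then closes the path `2, …, n+1` into a copy of `C_n`. Iterating shortens
the induced `C_m` by two at a time down to `C_k`.
-/

lemma pivotToggle_comm {V : Type*} {G : SimpleGraph V} {u v a b : V} :
    pivotToggle G u v a b ↔ pivotToggle G u v b a := by
  unfold pivotToggle
  simp only [or_comm, or_left_comm]

lemma SimpleGraph.Embedding.pivotToggle_iff {V W : Type*} {G : SimpleGraph V}
    {H : SimpleGraph W} (f : G ↪g H) (u v a b : V) :
    pivotToggle H (f u) (f v) (f a) (f b) ↔ pivotToggle G u v a b := by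
  simp only [pivotToggle, f.map_adj_iff, ne_eq, f.injective.eq_iff]

def SimpleGraph.Embedding.pivot {V W : Type*} {G : SimpleGraph V} {H : SimpleGraph W}
    (f : G ↪g H) (u v : V) : _root_.pivot G u v ↪g _root_.pivot H (f u) (f v) where
  toEmbedding := f.toEmbedding
  map_rel_iff' {a b} := by
    classical
    have swap_map (x : V) : Equiv.swap (f u) (f v) (f x) = f (Equiv.swap u v x) :=
      f.injective.swap_apply u v x
    simp only [_root_.pivot, fromRel_adj, RelEmbedding.coe_toEmbedding,
      swap_map, f.pivotToggle_iff, f.map_adj_iff, ne_eq, f.injective.eq_iff]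

lemma pivot_adj_of_ne {V : Type*} {G : SimpleGraph V} {u v x y : V}
    (hxu : x ≠ u) (hxv : x ≠ v) (hyu : y ≠ u) (hyv : y ≠ v) :
    (pivot G u v).Adj x y ↔ x ≠ y ∧ Xor (pivotToggle G u v x y) (G.Adj x y) := by
  simp only [pivot, fromRel_adj, Equiv.swap_apply_of_ne_of_ne, hxu, hxv, hyu, hyv, ne_eq,
    not_false_eq_true, pivotToggle_comm (a := y), G.adj_comm y x, Xor, or_self,
    and_comm (a := ¬pivotToggle G u v x y)]

lemma PivotStep.exists_embedding {V W : Type*} {K K' : SimpleGraph W} {G : SimpleGraph V}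
    (h : PivotStep K K') (f : K ↪g G) : ∃ G', PivotStep G G' ∧ Nonempty (K' ↪g G') := by
  obtain ⟨u, v, huv, rfl⟩ := h
  exact ⟨pivot G (f u) (f v), ⟨f u, f v, f.map_adj_iff.mpr huv, rfl⟩, ⟨f.pivot u v⟩⟩

lemma exists_pivotSteps_embedding {V W : Type*} {K K' : SimpleGraph W} {G : SimpleGraph V}
    (h : Relation.ReflTransGen PivotStep K K') (f : K ↪g G) :
    ∃ G', Relation.ReflTransGen PivotStep G G' ∧ Nonempty (K' ↪g G') := by
  induction h with
  | refl => exact ⟨G, .refl, ⟨f⟩⟩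
  | tail _ hstep ih =>
    obtain ⟨G₁, hG₁, ⟨f₁⟩⟩ := ih
    obtain ⟨G₂, hG₂, f₂⟩ := hstep.exists_embedding f₁
    exact ⟨G₂, hG₁.tail hG₂, f₂⟩

lemma isPivotMinor_iff_exists_embedding {V W : Type*} {H : SimpleGraph W} {G : SimpleGraph V} :
    IsPivotMinor H G ↔ ∃ G', Relation.ReflTransGen PivotStep G G' ∧ Nonempty (H ↪g G') := by
  constructor
  · rintro ⟨G', hG', S, ⟨e⟩⟩
    exact ⟨G', hG', ⟨(Embedding.induce S).comp e.toEmbedding⟩⟩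
  · rintro ⟨G', hG', ⟨f⟩⟩
    exact ⟨G', hG', Set.range f, ⟨f.isoInduceRange⟩⟩

lemma IsPivotMinor.trans {U V W : Type*} {H : SimpleGraph U} {K : SimpleGraph W}
    {G : SimpleGraph V} (hHK : IsPivotMinor H K) (hKG : IsPivotMinor K G) :
    IsPivotMinor H G := by
  rw [isPivotMinor_iff_exists_embedding] at *
  obtain ⟨K', hK', ⟨f⟩⟩ := hHK
  obtain ⟨G', hG', ⟨g⟩⟩ := hKG
  obtain ⟨G'', hG'', ⟨g'⟩⟩ := exists_pivotSteps_embedding hK' g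
  exact ⟨G'', hG'.trans hG'', ⟨g'.comp f⟩⟩

lemma cycleGraph_adj_iff_val {n : ℕ} (hn : 1 < n) {u v : Fin n} :
    (cycleGraph n).Adj u v ↔ u.val + 1 = v.val ∨ v.val + 1 = u.val ∨
      (u.val = 0 ∧ v.val + 1 = n) ∨ (v.val = 0 ∧ u.val + 1 = n) := by
  rw [cycleGraph_adj']
  rcases lt_trichotomy u v with h | rfl | h
  · rw [Fin.coe_sub_iff_lt.mpr h, Fin.coe_sub_iff_le.mpr h.le]
    omega
  · rw [Fin.coe_sub_iff_le.mpr le_rfl]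
    omega
  · rw [Fin.coe_sub_iff_le.mpr h.le, Fin.coe_sub_iff_lt.mpr h]
    omega

lemma pivotToggle_cycleGraph {n : ℕ} (hn : 2 ≤ n) {a b : Fin (n + 2)} (ha : 2 ≤ a.val)
    (hb : 2 ≤ b.val) :
    pivotToggle (cycleGraph (n + 2)) 0 1 a b ↔
      (a.val = n + 1 ∧ b.val = 2) ∨ (a.val = 2 ∧ b.val = n + 1) := by
  have adj_zero {x : Fin (n + 2)} (hx : 2 ≤ x.val) :
      (cycleGraph (n + 2)).Adj 0 x ↔ x.val = n + 1 := by
    rw [cycleGraph_adj_iff_val (by omega), Fin.val_zero]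
    omega
  have adj_one {x : Fin (n + 2)} (hx : 2 ≤ x.val) :
      (cycleGraph (n + 2)).Adj 1 x ↔ x.val = 2 := by
    rw [cycleGraph_adj_iff_val (by omega), Fin.val_one]
    omega
  simp only [pivotToggle, adj_zero ha, adj_zero hb, adj_one ha, adj_one hb, ne_eq, Fin.ext_iff,
    Fin.val_zero, Fin.val_one]
  omega

def cycleGraphEmbeddingPivot {n : ℕ} (hn : 3 ≤ n) :
    cycleGraph n ↪g pivot (cycleGraph (n + 2)) 0 1 where
  toEmbedding := Fin.addNatEmb 2
  map_rel_iff' {i j} := by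
    have away (x : Fin n) : x.addNat 2 ≠ 0 ∧ x.addNat 2 ≠ 1 := by
      simp only [ne_eq, Fin.ext_iff, Fin.val_addNat, Fin.val_zero, Fin.val_one]
      omega
    simp only [Fin.addNatEmb_apply]
    rw [pivot_adj_of_ne (away i).1 (away i).2 (away j).1 (away j).2,
      pivotToggle_cycleGraph (by omega) (by simp) (by simp),
      cycleGraph_adj_iff_val (by omega), cycleGraph_adj_iff_val (by omega)]
    simp only [ne_eq, Fin.ext_iff, Fin.val_addNat, Xor]
    omega

lemma isPivotMinor_cycleGraph_add_two {n : ℕ} (hn : 3 ≤ n) :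
    IsPivotMinor (cycleGraph n) (cycleGraph (n + 2)) :=
  isPivotMinor_iff_exists_embedding.mpr
    ⟨_, .single ⟨0, 1, by simp [cycleGraph_adj], rfl⟩, ⟨cycleGraphEmbeddingPivot hn⟩⟩

lemma isPivotMinor_cycleGraph_add_two_mul {k : ℕ} (hk : 3 ≤ k) (j : ℕ) :
    IsPivotMinor (cycleGraph k) (cycleGraph (k + 2 * j)) := by
  induction j with
  | zero => exact ⟨_, .refl, Set.univ, ⟨(induceUnivIso _).symm⟩⟩
  | succ j ih => exact ih.trans (isPivotMinor_cycleGraph_add_two (by omega))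

/-- If a graph `G` has an induced cycle of length `m ≥ k` with `m ≡ k (mod 2)`
(for `k ≥ 3`), then `G` has a pivot-minor isomorphic to `C_k`. -/
theorem stmt_11 {V : Type*} (G : SimpleGraph V) (k m : ℕ) (hk : 3 ≤ k)
    (hkm : k ≤ m) (hpar : m % 2 = k % 2) (S : Set V)
    (hcycle : Nonempty (G.induce S ≃g cycleGraph m)) :
    IsPivotMinor (cycleGraph k) G := by
  obtain ⟨e⟩ := hcycle
  obtain ⟨j, rfl⟩ : ∃ j, m = k + 2 * j := ⟨(m - k) / 2, by omega⟩
  exact (isPivotMinor_cycleGraph_add_two_mul hk j).trans ⟨G, .refl, S, ⟨e.symm⟩⟩
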